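/- Let q ≥ 1 be an integer, τ = 1/q, and α ≤ β real numbers with β − α + 2τ < 2π. Let c_a (a ∈ ℤ) be the Fourier coefficients of h_{α,β,τ} regarded as a function on ℝ/2πℤ. Then Σ_{a=0}^{∞} √a · |c_a| ≤ (4√3/π)·q^{1/2}. -/

import Mathlib

/-
The support `[α - τ, β + τ]` of `h` is shorter than `2π`, so `2π c_a` is the Fourier integral of
`h` itself. The derivative `h'` is continuous and is made of two copies of the bump
`g'((x - s) / τ) / τ`, at `s = α - τ` and, with a minus sign, at `s = β`. One integration by parts
therefore gives `c_a = (e^{-ia(α-τ)} - e^{-iaβ}) B(aτ) / (2πia)`, where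
`B(ξ) = ∫₀¹ g'(u) e^{-iξu} du`. Now `|B| ≤ ∫₀¹ g' = 1`, and a second integration by parts gives
`|B(ξ)| ≤ (∫₀¹ |g''|) / |ξ| = 3 / |ξ|`, so `√a |c_a| ≤ min(a^{-1/2}, 3q a^{-3/2}) / π`. Splitting
the sum at `a = 3q`, each part is at most `2√(3q) / π`.
-/

open MeasureTheory

/-- The cubic `g(x) = -2x³ + 3x²`. -/
noncomputable def gcube (x : ℝ) : ℝ := -2 * x ^ 3 + 3 * x ^ 2

/-- The smoothed bump function `h_{α,β,τ}`. -/
noncomputable def hfun (α β τ : ℝ) (x : ℝ) : ℝ :=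
  if x ≤ α - τ then 0
  else if x ≤ α then gcube ((x - α + τ) / τ)
  else if x ≤ β then 1
  else if x ≤ β + τ then gcube ((β + τ - x) / τ)
  else 0

/-- The `2π`-periodization of `h_{α,β,τ}`, i.e. `h_{α,β,τ}` regarded as a function on
`ℝ/2πℤ`. -/
noncomputable def hper (α β τ : ℝ) (x : ℝ) : ℝ :=
  ∑' k : ℤ, hfun α β τ (x + 2 * Real.pi * k)

/-- The Fourier coefficients of `h_{α,β,τ}` regarded as a function on `ℝ/2πℤ`:
`c_a = (1/2π) ∫ over one period of the periodization of h(x) e^{-iax} dx`. -/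
noncomputable def fourierC (α β τ : ℝ) (a : ℤ) : ℂ :=
  (1 / (2 * Real.pi)) *
    ∫ x in (0 : ℝ)..(2 * Real.pi), (hper α β τ x : ℂ) * Complex.exp (-Complex.I * a * x)

open Complex Set

noncomputable def gcubeDeriv (u : ℝ) : ℝ := 6 * u * (1 - u)

theorem hasDerivAt_gcube (u : ℝ) : HasDerivAt gcube (gcubeDeriv u) u := by
  have := ((hasDerivAt_pow 3 u).const_mul (-2)).add ((hasDerivAt_pow 2 u).const_mul 3)
  exact this.congr_deriv (by simp only [gcubeDeriv]; ring)

theorem hasDerivAt_gcubeDeriv (u : ℝ) : HasDerivAt gcubeDeriv (6 - 12 * u) u := by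
  have := ((hasDerivAt_id' u).const_mul 6).mul ((hasDerivAt_id' u).const_sub 1)
  exact this.congr_deriv (by ring)

theorem gcubeDeriv_one_sub (u : ℝ) : gcubeDeriv (1 - u) = gcubeDeriv u := by
  simp only [gcubeDeriv]; ring

theorem hasDerivAt_ite_le {E : Type*} [NormedAddCommGroup E] [NormedSpace ℝ E]
    {f g f' g' : ℝ → E} {c : ℝ} (hf : ∀ x, HasDerivAt f (f' x) x)
    (hg : ∀ x, HasDerivAt g (g' x) x) (hfg : f c = g c) (hfg' : f' c = g' c) (x : ℝ) :
    HasDerivAt (fun y => if y ≤ c then f y else g y) (if x ≤ c then f' x else g' x) x := by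
  rcases lt_trichotomy x c with hx | rfl | hx
  · rw [if_pos hx.le]
    refine (hf x).congr_of_eventuallyEq ?_
    filter_upwards [Iio_mem_nhds hx] with y hy
    rw [if_pos (le_of_lt hy)]
  · rw [if_pos le_rfl]
    have hleft : HasDerivWithinAt (fun y => if y ≤ x then f y else g y) (f' x) (Iic x) x :=
      (hf x).hasDerivWithinAt.congr (fun y hy => if_pos hy) (if_pos le_rfl)
    have hright : HasDerivWithinAt (fun y => if y ≤ x then f y else g y) (f' x) (Ici x) x := by
      refine hfg' ▸ (hg x).hasDerivWithinAt.congr (fun y hy => ?_) (by simp [hfg])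
      rcases (mem_Ici.1 hy).eq_or_lt with rfl | hy
      · simp [hfg]
      · exact if_neg (not_le.2 hy)
    simpa [Iic_union_Ici] using hleft.union hright
  · rw [if_neg (not_le.2 hx)]
    refine (hg x).congr_of_eventuallyEq ?_
    filter_upwards [Ioi_mem_nhds hx] with y hy
    rw [if_neg (not_le.2 hy)]

theorem tsum_add_mul_int_eq_self {E : Type*} [AddCommMonoid E] [TopologicalSpace E]
    {f : ℝ → E} {L R T x : ℝ} (hT : 0 ≤ T) (hRL : R ≤ L + T) (hf : ∀ y ∉ Ioo L R, f y = 0)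
    (hx : x ∈ Icc L (L + T)) : ∑' k : ℤ, f (x + T * k) = f x := by
  rw [tsum_eq_single 0 fun k hk => hf _ ?_]
  · simp
  rintro ⟨hL, hR⟩
  rcases lt_or_gt_of_ne hk with hk | hk
  · have : (k : ℝ) ≤ -1 := by exact_mod_cast Int.le_sub_one_of_lt hk
    nlinarith [hx.2]
  · have : (1 : ℝ) ≤ k := by exact_mod_cast hk
    nlinarith [hx.1]

theorem periodic_cexp_neg_I_mul (a : ℤ) :
    Function.Periodic (fun x : ℝ => exp (-I * a * x)) (2 * Real.pi) := fun x => by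
  simpa [mul_add, add_mul, mul_comm, mul_left_comm, mul_assoc] using
    Complex.exp_periodic.int_mul (-a) (-I * a * x)

theorem integral_tsum_add_mul_int_mul_cexp {f : ℝ → ℝ} {L R : ℝ} (hLR : L ≤ R)
    (hRL : R ≤ L + 2 * Real.pi) (hf : ∀ y ∉ Ioo L R, f y = 0) (a : ℤ) :
    ∫ x in (0 : ℝ)..(2 * Real.pi),
        ((∑' k : ℤ, f (x + 2 * Real.pi * k) : ℝ) : ℂ) * exp (-I * a * x) =
      ∫ x in L..R, (f x : ℂ) * exp (-I * a * x) := by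
  have hsum : Function.Periodic (fun x => ∑' k : ℤ, f (x + 2 * Real.pi * k)) (2 * Real.pi) :=
    fun x => by
      simp only
      rw [← (Equiv.addRight (1 : ℤ)).tsum_eq fun k : ℤ => f (x + 2 * Real.pi * k)]
      refine tsum_congr fun k => congrArg f ?_
      simp only [Equiv.coe_addRight]
      push_cast
      ring
  have hperiodic : Function.Periodic
      (fun x => ((∑' k : ℤ, f (x + 2 * Real.pi * k) : ℝ) : ℂ) * exp (-I * a * x)) (2 * Real.pi) :=
    fun x => by simp only [hsum x, periodic_cexp_neg_I_mul a x]
  have hshift := hperiodic.intervalIntegral_add_eq 0 L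
  rw [zero_add] at hshift
  rw [hshift, intervalIntegral.integral_of_le (by linarith), intervalIntegral.integral_of_le hLR,
    ← setIntegral_eq_of_subset_of_forall_sdiff_eq_zero measurableSet_Ioc (Ioc_subset_Ioc_right hRL)]
  · refine setIntegral_congr_fun measurableSet_Ioc fun x hx => ?_
    rw [tsum_add_mul_int_eq_self (by positivity) hRL hf (Ioc_subset_Icc_self hx)]
  · rintro x ⟨hx, hxR⟩
    rw [hf x fun h => hxR ⟨hx.1, h.2.le⟩, ofReal_zero, zero_mul]

theorem hasDerivAt_cexp_neg_I_mul (c : ℂ) (x : ℝ) :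
    HasDerivAt (fun x : ℝ => exp (-I * c * x)) (-I * c * exp (-I * c * x)) x := by
  simpa [mul_comm] using ((hasDerivAt_id' x).ofReal_comp.const_mul (-I * c)).cexp

theorem integral_mul_cexp_eq_of_hasDerivAt {f f' : ℝ → ℂ} {a b : ℝ} {c : ℂ} (hc : c ≠ 0)
    (hf : ∀ x ∈ uIcc a b, HasDerivAt f (f' x) x) (hf' : IntervalIntegrable f' volume a b)
    (ha : f a = 0) (hb : f b = 0) :
    ∫ x in a..b, f x * exp (-I * c * x) = (I * c)⁻¹ * ∫ x in a..b, f' x * exp (-I * c * x) := by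
  have hv : ∀ x : ℝ, HasDerivAt (fun x : ℝ => exp (-I * c * x) / (-I * c)) (exp (-I * c * x)) x :=
    fun x => ((hasDerivAt_cexp_neg_I_mul c x).div_const _).congr_deriv (by field_simp)
  rw [intervalIntegral.integral_mul_deriv_eq_deriv_mul hf (fun x _ => hv x) hf'
    ((by fun_prop : Continuous fun x : ℝ => exp (-I * c * x)).intervalIntegrable _ _), ha, hb,
    ← intervalIntegral.integral_const_mul]
  simp only [zero_mul, sub_zero, zero_sub, ← intervalIntegral.integral_neg]
  congr 1 with x
  field_simp

theorem norm_cexp_neg_I_mul (c x : ℝ) : ‖exp (-I * c * x)‖ = 1 := by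
  simp [norm_exp]

theorem norm_integral_mul_cexp_le {f f' : ℝ → ℂ} {a b c : ℝ} (hab : a ≤ b) (hc : c ≠ 0)
    (hf : ∀ x ∈ uIcc a b, HasDerivAt f (f' x) x) (hf' : IntervalIntegrable f' volume a b)
    (ha : f a = 0) (hb : f b = 0) :
    ‖∫ x in a..b, f x * exp (-I * c * x)‖ ≤ (∫ x in a..b, ‖f' x‖) / |c| := by
  rw [integral_mul_cexp_eq_of_hasDerivAt (ofReal_ne_zero.2 hc) hf hf' ha hb, norm_mul,
    div_eq_inv_mul]
  refine mul_le_mul (by simp) ((intervalIntegral.norm_integral_le_integral_norm hab).trans_eq ?_)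
    (norm_nonneg _) (by positivity)
  simp only [norm_mul, norm_cexp_neg_I_mul, mul_one]

noncomputable def gcubeDerivFourier (ξ : ℝ) : ℂ :=
  ∫ u in (0 : ℝ)..1, (gcubeDeriv u : ℂ) * exp (-I * ξ * u)

theorem norm_gcubeDerivFourier_le_one (ξ : ℝ) : ‖gcubeDerivFourier ξ‖ ≤ 1 := by
  calc ‖gcubeDerivFourier ξ‖ ≤ ∫ u in (0 : ℝ)..1, ‖(gcubeDeriv u : ℂ) * exp (-I * ξ * u)‖ :=
        intervalIntegral.norm_integral_le_integral_norm zero_le_one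
    _ = ∫ u in (0 : ℝ)..1, gcubeDeriv u := by
        refine intervalIntegral.integral_congr fun u hu => ?_
        rw [uIcc_of_le zero_le_one] at hu
        simp only [norm_mul, norm_cexp_neg_I_mul, mul_one, norm_real, Real.norm_eq_abs]
        exact abs_of_nonneg (by unfold gcubeDeriv; nlinarith [hu.1, hu.2])
    _ = 1 := by
        rw [intervalIntegral.integral_eq_sub_of_hasDerivAt (fun u _ => hasDerivAt_gcube u)
          ((by unfold gcubeDeriv; fun_prop : Continuous gcubeDeriv).intervalIntegrable _ _)]
        norm_num [gcube]

theorem integral_abs_six_sub_twelve_mul : ∫ u in (0 : ℝ)..1, |6 - 12 * u| = 3 := by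
  have hcont : Continuous fun u : ℝ => 6 - 12 * u := by fun_prop
  rw [← intervalIntegral.integral_add_adjacent_intervals (b := 1 / 2)
    (hcont.abs.intervalIntegrable _ _) (hcont.abs.intervalIntegrable _ _)]
  have h₁ : ∫ u in (0 : ℝ)..1 / 2, |6 - 12 * u| = ∫ u in (0 : ℝ)..1 / 2, (6 - 12 * u) := by
    refine intervalIntegral.integral_congr fun u hu => ?_
    rw [uIcc_of_le (by norm_num)] at hu
    exact abs_of_nonneg (by linarith [hu.2])
  have h₂ : ∫ u in (1 / 2 : ℝ)..1, |6 - 12 * u| = ∫ u in (1 / 2 : ℝ)..1, -(6 - 12 * u) := by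
    refine intervalIntegral.integral_congr fun u hu => ?_
    rw [uIcc_of_le (by norm_num)] at hu
    exact abs_of_nonpos (by linarith [hu.1])
  rw [h₁, h₂, intervalIntegral.integral_neg,
    intervalIntegral.integral_eq_sub_of_hasDerivAt (fun u _ => hasDerivAt_gcubeDeriv u)
      (hcont.intervalIntegrable _ _),
    intervalIntegral.integral_eq_sub_of_hasDerivAt (fun u _ => hasDerivAt_gcubeDeriv u)
      (hcont.intervalIntegrable _ _)]
  norm_num [gcubeDeriv]

theorem norm_gcubeDerivFourier_le {ξ : ℝ} (hξ : ξ ≠ 0) : ‖gcubeDerivFourier ξ‖ ≤ 3 / |ξ| := by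
  have h := norm_integral_mul_cexp_le zero_le_one hξ
    (fun u _ => (hasDerivAt_gcubeDeriv u).ofReal_comp)
    ((by fun_prop : Continuous fun u : ℝ => ((6 - 12 * u : ℝ) : ℂ)).intervalIntegrable _ _)
    (by simp [gcubeDeriv]) (by simp [gcubeDeriv])
  simpa only [gcubeDerivFourier, norm_real, Real.norm_eq_abs, integral_abs_six_sub_twelve_mul]
    using h

theorem integral_gcubeDeriv_comp_mul_cexp {τ : ℝ} (hτ : τ ≠ 0) (s c : ℝ) :
    ∫ x in s..s + τ, ((gcubeDeriv ((x - s) / τ) / τ : ℝ) : ℂ) * exp (-I * c * x) =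
      exp (-I * c * s) * gcubeDerivFourier (c * τ) := by
  have hsubst := intervalIntegral.smul_integral_comp_mul_add (a := 0) (b := 1)
    (fun x : ℝ => ((gcubeDeriv ((x - s) / τ) / τ : ℝ) : ℂ) * exp (-I * c * x)) τ s
  rw [mul_zero, zero_add, mul_one, add_comm] at hsubst
  rw [← hsubst, gcubeDerivFourier, ← intervalIntegral.integral_const_mul, real_smul,
    ← intervalIntegral.integral_const_mul]
  congr 1 with u
  have hexp : -I * c * ((τ * u + s : ℝ) : ℂ) = -I * c * s + -I * ((c * τ : ℝ) : ℂ) * u := by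
    push_cast
    ring
  have hτ' : (τ : ℂ) ≠ 0 := ofReal_ne_zero.2 hτ
  rw [add_sub_cancel_right, mul_div_cancel_left₀ u hτ, hexp, exp_add]
  push_cast
  field_simp

section Sums

open Finset

theorem sum_Ioc_inv_sqrt_le (N : ℕ) : ∑ n ∈ Ioc 0 N, 1 / √(n : ℝ) ≤ 2 * √(N : ℝ) := by
  induction N with
  | zero => simp
  | succ N ih =>
    rw [sum_Ioc_succ_top (Nat.zero_le N), Nat.cast_succ]
    have hN1 : 0 < √((N : ℝ) + 1) := Real.sqrt_pos.2 (by positivity)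
    have hsq : √((N : ℝ) + 1) ^ 2 = √(N : ℝ) ^ 2 + 1 := by
      rw [Real.sq_sqrt (by positivity), Real.sq_sqrt (by positivity)]
    have hstep : 1 / √((N : ℝ) + 1) ≤ 2 * √((N : ℝ) + 1) - 2 * √(N : ℝ) := by
      rw [div_le_iff₀ hN1]
      nlinarith [sq_nonneg (√((N : ℝ) + 1) - √(N : ℝ))]
    linarith

theorem sum_Ioc_inv_mul_sqrt_le {M : ℕ} (hM : 0 < M) (k : ℕ) :
    ∑ n ∈ Ioc M (M + k), 1 / ((n : ℝ) * √(n : ℝ)) ≤ 2 / √(M : ℝ) - 2 / √((M + k : ℕ) : ℝ) := by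
  induction k with
  | zero => simp
  | succ k ih =>
    rw [← add_assoc, sum_Ioc_succ_top (Nat.le_add_right M k)]
    set N : ℕ := M + k
    have hN : 0 < √(N : ℝ) := Real.sqrt_pos.2 (by positivity)
    have hN1 : 0 < √((N + 1 : ℕ) : ℝ) := Real.sqrt_pos.2 (by positivity)
    have hcast : ((N + 1 : ℕ) : ℝ) = √((N + 1 : ℕ) : ℝ) ^ 2 := (Real.sq_sqrt (by positivity)).symm
    have hsq : √((N + 1 : ℕ) : ℝ) ^ 2 = √(N : ℝ) ^ 2 + 1 := by
      rw [← hcast, Real.sq_sqrt (by positivity), Nat.cast_succ]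
    have hstep : 1 / (((N + 1 : ℕ) : ℝ) * √((N + 1 : ℕ) : ℝ)) ≤
        2 / √(N : ℝ) - 2 / √((N + 1 : ℕ) : ℝ) := by
      set s := √(N : ℝ)
      set t := √((N + 1 : ℕ) : ℝ)
      rw [hcast, div_sub_div _ _ hN.ne' hN1.ne',
        div_le_div_iff₀ (by positivity) (by positivity)]
      have hst : s * t * ((t - s) * (t + s)) = s * t := by
        rw [show (t - s) * (t + s) = 1 by linear_combination hsq, mul_one]
      nlinarith [mul_nonneg (mul_nonneg hN1.le (sq_nonneg (t - s))) (by positivity : 0 ≤ 2 * t + s)]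
    linarith

theorem sqrt_mul_div_self (x c : ℝ) : √x * (c / x) = c / √x := by
  rw [mul_div_left_comm, Real.sqrt_div_self', mul_one_div]

theorem tsum_sqrt_mul_le {s : ℕ → ℝ} {K : ℝ} {M : ℕ} (hM : 0 < M) (hs : ∀ n, 0 ≤ s n)
    (hsmall : ∀ n, 0 < n → s n ≤ K / n) (hlarge : ∀ n, 0 < n → s n ≤ K * M / n ^ 2) :
    ∑' n : ℕ, √(n : ℝ) * s n ≤ 4 * K * √(M : ℝ) := by
  have hK : 0 ≤ K := by simpa using (hs 1).trans (hsmall 1 one_pos)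
  refine Real.tsum_le_of_sum_range_le (fun n => mul_nonneg (Real.sqrt_nonneg _) (hs n))
    fun N => ?_
  -- Pad the range to `M + N`, so that it splits into the head `Ioc 0 M` and the tail
  -- `Ioc M (M + N)`.
  calc ∑ n ∈ range N, √(n : ℝ) * s n ≤ ∑ n ∈ insert 0 (Ioc 0 (M + N)), √(n : ℝ) * s n :=
        sum_le_sum_of_subset_of_nonneg (fun n hn => by simp at hn ⊢; omega)
          fun n _ _ => mul_nonneg (Real.sqrt_nonneg _) (hs n)
    _ = ∑ n ∈ Ioc 0 M, √(n : ℝ) * s n + ∑ n ∈ Ioc M (M + N), √(n : ℝ) * s n := by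
        rw [sum_insert (by simp), Nat.cast_zero, Real.sqrt_zero, zero_mul, zero_add,
          sum_Ioc_consecutive _ (Nat.zero_le M) (by omega)]
    _ ≤ ∑ n ∈ Ioc 0 M, K * (1 / √(n : ℝ)) +
          ∑ n ∈ Ioc M (M + N), K * M * (1 / ((n : ℝ) * √(n : ℝ))) := by
        refine add_le_add (sum_le_sum fun n hn => ?_) (sum_le_sum fun n hn => ?_)
        · calc √(n : ℝ) * s n ≤ √(n : ℝ) * (K / n) := by gcongr; exact hsmall n (mem_Ioc.1 hn).1
            _ = K * (1 / √(n : ℝ)) := by rw [sqrt_mul_div_self, mul_one_div]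
        · calc √(n : ℝ) * s n ≤ √(n : ℝ) * (K * M / n / n) := by
                rw [div_div, ← sq]
                gcongr
                exact hlarge n (by simp at hn; omega)
            _ = K * M * (1 / ((n : ℝ) * √(n : ℝ))) := by
                rw [sqrt_mul_div_self, div_div, mul_one_div]
    _ ≤ K * (2 * √(M : ℝ)) + K * M * (2 / √(M : ℝ)) := by
        rw [← mul_sum, ← mul_sum]
        have := sum_Ioc_inv_mul_sqrt_le hM N
        gcongr
        · exact sum_Ioc_inv_sqrt_le M
        · linarith [show 0 ≤ 2 / √((M + N : ℕ) : ℝ) by positivity]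
    _ = 4 * K * √(M : ℝ) := by
        field_simp
        rw [Real.sq_sqrt (Nat.cast_nonneg M)]
        ring

end Sums

noncomputable def hfunDeriv (α β τ : ℝ) (x : ℝ) : ℝ :=
  if x ≤ α - τ then 0
  else if x ≤ α then gcubeDeriv ((x - α + τ) / τ) / τ
  else if x ≤ β then 0
  else if x ≤ β + τ then -gcubeDeriv ((β + τ - x) / τ) / τ
  else 0

section hfun

variable {α β τ : ℝ}

theorem hasDerivAt_hfun (hτ : 0 < τ) (hab : α ≤ β) (x : ℝ) :
    HasDerivAt (hfun α β τ) (hfunDeriv α β τ x) x := by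
  have hup : ∀ x, HasDerivAt (fun x => gcube ((x - α + τ) / τ))
      (gcubeDeriv ((x - α + τ) / τ) / τ) x := fun x => by
    have := (((hasDerivAt_id' x).sub_const α).add_const τ).div_const τ
    exact ((hasDerivAt_gcube _).comp x this).congr_deriv (by ring)
  have hdown : ∀ x, HasDerivAt (fun x => gcube ((β + τ - x) / τ))
      (-gcubeDeriv ((β + τ - x) / τ) / τ) x := fun x => by
    have := ((hasDerivAt_id' x).const_sub (β + τ)).div_const τ
    exact ((hasDerivAt_gcube _).comp x this).congr_deriv (by ring)
  have hconst : ∀ (b : ℝ) x, HasDerivAt (fun _ : ℝ => b) 0 x := fun b x => hasDerivAt_const x b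
  -- `hfun` is a four-fold nested `if`: glue from the innermost break point `β + τ` outwards.
  have hβτ := hasDerivAt_ite_le hdown (hconst 0) (c := β + τ)
    (by simp [gcube]) (by simp [gcubeDeriv])
  have hβ := hasDerivAt_ite_le (hconst 1) hβτ (c := β)
    (by norm_num [hτ.ne', gcube, hτ.le]) (by simp [gcubeDeriv, hτ.ne', hτ.le])
  have hα := hasDerivAt_ite_le hup hβ (c := α)
    (by norm_num [hτ.ne', gcube, hab]) (by simp [gcubeDeriv, hτ.ne', hab])
  exact hasDerivAt_ite_le (hconst 0) hα (by simp [gcube, hτ.le]) (by simp [gcubeDeriv, hτ.le]) x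

theorem continuous_hfunDeriv (hτ : 0 < τ) (hab : α ≤ β) : Continuous (hfunDeriv α β τ) := by
  have hup : Continuous fun x => gcubeDeriv ((x - α + τ) / τ) / τ := by
    unfold gcubeDeriv; fun_prop
  have hdown : Continuous fun x => -gcubeDeriv ((β + τ - x) / τ) / τ := by
    unfold gcubeDeriv; fun_prop
  refine continuous_const.if_le (hup.if_le (continuous_const.if_le
    (hdown.if_le continuous_const continuous_id continuous_const ?_)
    continuous_id continuous_const ?_) continuous_id continuous_const ?_)
    continuous_id continuous_const ?_ <;>
  · rintro x rfl
    norm_num [gcubeDeriv, hτ.ne', hτ.le, hab]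

theorem hfun_eq_zero_of_notMem (hτ : 0 < τ) (hab : α ≤ β) {x : ℝ}
    (hx : x ∉ Ioo (α - τ) (β + τ)) : hfun α β τ x = 0 := by
  rw [mem_Ioo, not_and_or, not_lt, not_lt] at hx
  rcases hx with hx | hx
  · simp [hfun, hx]
  rw [hfun, if_neg (by linarith), if_neg (by linarith), if_neg (by linarith)]
  rcases hx.eq_or_lt with rfl | hx
  · simp [gcube]
  · rw [if_neg (not_le.2 hx)]

theorem integral_hfunDeriv_mul_cexp (hτ : 0 < τ) (hab : α ≤ β) (c : ℝ) :
    ∫ x in (α - τ)..(β + τ), (hfunDeriv α β τ x : ℂ) * exp (-I * c * x) =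
      (exp (-I * c * ↑(α - τ)) - exp (-I * c * β)) * gcubeDerivFourier (c * τ) := by
  have hint : ∀ a b, IntervalIntegrable (fun x => (hfunDeriv α β τ x : ℂ) * exp (-I * c * x))
      volume a b := fun a b =>
    ((continuous_ofReal.comp (continuous_hfunDeriv hτ hab)).mul (by fun_prop)).intervalIntegrable
      a b
  rw [← intervalIntegral.integral_add_adjacent_intervals (hint _ β) (hint _ _),
    ← intervalIntegral.integral_add_adjacent_intervals (hint _ α) (hint _ _)]
  have hup : ∫ x in (α - τ)..α, (hfunDeriv α β τ x : ℂ) * exp (-I * c * x) =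
      exp (-I * c * ↑(α - τ)) * gcubeDerivFourier (c * τ) := by
    rw [← integral_gcubeDeriv_comp_mul_cexp hτ.ne', sub_add_cancel]
    refine intervalIntegral.integral_congr_ae (Filter.Eventually.of_forall fun x hx => ?_)
    rw [uIoc_of_le (by linarith)] at hx
    rw [hfunDeriv, if_neg (not_le.2 hx.1), if_pos hx.2, sub_add]
  have hflat : ∫ x in α..β, (hfunDeriv α β τ x : ℂ) * exp (-I * c * x) = 0 := by
    rw [← intervalIntegral.integral_zero]
    refine intervalIntegral.integral_congr_ae (Filter.Eventually.of_forall fun x hx => ?_)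
    rw [uIoc_of_le hab] at hx
    rw [hfunDeriv, if_neg (by linarith [hx.1]), if_neg (not_le.2 hx.1), if_pos hx.2,
      ofReal_zero, zero_mul]
  have hdown : ∫ x in β..(β + τ), (hfunDeriv α β τ x : ℂ) * exp (-I * c * x) =
      -(exp (-I * c * β) * gcubeDerivFourier (c * τ)) := by
    rw [← integral_gcubeDeriv_comp_mul_cexp hτ.ne', ← intervalIntegral.integral_neg]
    refine intervalIntegral.integral_congr_ae (Filter.Eventually.of_forall fun x hx => ?_)
    rw [uIoc_of_le (by linarith)] at hx
    rw [hfunDeriv, if_neg (by linarith [hx.1]), if_neg (by linarith [hx.1]), if_neg (not_le.2 hx.1),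
      if_pos hx.2, show (β + τ - x) / τ = 1 - (x - β) / τ by field_simp; ring, gcubeDeriv_one_sub]
    push_cast
    ring
  rw [hup, hflat, hdown]
  ring

theorem fourierC_eq_integral (hτ : 0 < τ) (hab : α ≤ β)
    (hlen : β - α + 2 * τ < 2 * Real.pi) (a : ℤ) :
    fourierC α β τ a =
      1 / (2 * Real.pi) * ∫ x in (α - τ)..(β + τ), (hfun α β τ x : ℂ) * exp (-I * a * x) :=
  congrArg _ <| integral_tsum_add_mul_int_mul_cexp (by linarith) (by linarith)
    (fun _ hy => hfun_eq_zero_of_notMem hτ hab hy) a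

theorem fourierC_eq (hτ : 0 < τ) (hab : α ≤ β) (hlen : β - α + 2 * τ < 2 * Real.pi) {a : ℤ}
    (ha : a ≠ 0) :
    fourierC α β τ a = (exp (-I * a * ↑(α - τ)) - exp (-I * a * β)) *
      gcubeDerivFourier (a * τ) / (2 * Real.pi * I * a) := by
  have hends : ∀ x ∈ ({α - τ, β + τ} : Set ℝ), hfun α β τ x = 0 := by
    rintro x (rfl | rfl) <;> exact hfun_eq_zero_of_notMem hτ hab (by simp)
  have hderiv := integral_hfunDeriv_mul_cexp hτ hab a
  rw [ofReal_intCast] at hderiv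
  rw [fourierC_eq_integral hτ hab hlen, integral_mul_cexp_eq_of_hasDerivAt (Int.cast_ne_zero.2 ha)
    (fun x _ => (hasDerivAt_hfun hτ hab x).ofReal_comp)
    ((continuous_ofReal.comp (continuous_hfunDeriv hτ hab)).intervalIntegrable _ _)
    (by simp [hends]) (by simp [hends]), hderiv]
  field_simp

theorem norm_fourierC_le (hτ : 0 < τ) (hab : α ≤ β) (hlen : β - α + 2 * τ < 2 * Real.pi) {a : ℤ}
    (ha : a ≠ 0) : ‖fourierC α β τ a‖ ≤ ‖gcubeDerivFourier (a * τ)‖ / (Real.pi * |(a : ℝ)|) := by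
  have hexp : ∀ x : ℝ, ‖exp (-I * a * x)‖ = 1 := fun x => by
    simpa using norm_cexp_neg_I_mul a x
  have hdiff : ‖exp (-I * a * ↑(α - τ)) - exp (-I * a * β)‖ ≤ 2 :=
    (norm_sub_le _ _).trans (by rw [hexp, hexp]; norm_num)
  have hden : ‖(2 * Real.pi * I * a : ℂ)‖ = 2 * (Real.pi * |(a : ℝ)|) := by
    simp [Real.pi_pos.le, mul_assoc]
  rw [fourierC_eq hτ hab hlen ha, norm_div, norm_mul, hden]
  calc _ ≤ 2 * ‖gcubeDerivFourier (a * τ)‖ / (2 * (Real.pi * |(a : ℝ)|)) := by gcongr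
    _ = _ := by field_simp

theorem norm_fourierC_le_inv (hτ : 0 < τ) (hab : α ≤ β) (hlen : β - α + 2 * τ < 2 * Real.pi)
    {a : ℤ} (ha : a ≠ 0) : ‖fourierC α β τ a‖ ≤ 1 / (Real.pi * |(a : ℝ)|) :=
  (norm_fourierC_le hτ hab hlen ha).trans (by gcongr; exact norm_gcubeDerivFourier_le_one _)

theorem norm_fourierC_le_inv_sq (hτ : 0 < τ) (hab : α ≤ β) (hlen : β - α + 2 * τ < 2 * Real.pi)
    {a : ℤ} (ha : a ≠ 0) : ‖fourierC α β τ a‖ ≤ 3 / (Real.pi * τ * a ^ 2) := by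
  have ha' : (a : ℝ) ≠ 0 := Int.cast_ne_zero.2 ha
  refine (norm_fourierC_le hτ hab hlen ha).trans ?_
  calc _ ≤ 3 / |a * τ| / (Real.pi * |(a : ℝ)|) := by
        gcongr
        exact norm_gcubeDerivFourier_le (mul_ne_zero ha' hτ.ne')
    _ = 3 / (Real.pi * τ * a ^ 2) := by
        rw [abs_mul, abs_of_pos hτ, ← sq_abs (a : ℝ)]
        field_simp

end hfun

/-- With `τ = 1/q` for an integer `q ≥ 1`, the nonnegative Fourier coefficients of
`h_{α,β,τ}` satisfy `∑_{a=0}^∞ √a |c_a| ≤ (4√3/π) q^{1/2}`. -/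
theorem fourier_coeff_sqrt_sum_bound (q : ℕ) (hq : 1 ≤ q) (τ : ℝ) (hτ : τ = 1 / (q : ℝ))
    (α β : ℝ) (hab : α ≤ β) (hlen : β - α + 2 * τ < 2 * Real.pi) :
    ∑' a : ℕ, Real.sqrt (a : ℝ) * ‖fourierC α β τ (a : ℤ)‖ ≤
      (4 * Real.sqrt 3 / Real.pi) * Real.sqrt (q : ℝ) := by
  have hτ0 : 0 < τ := by rw [hτ]; positivity
  have hbound : 4 * Real.pi⁻¹ * √((3 * q : ℕ) : ℝ) = 4 * √3 / Real.pi * √(q : ℝ) := by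
    rw [Nat.cast_mul, Nat.cast_ofNat, Real.sqrt_mul (by norm_num)]
    ring
  refine hbound ▸ tsum_sqrt_mul_le (K := Real.pi⁻¹) (M := 3 * q) (by omega)
    (s := fun n : ℕ => ‖fourierC α β τ n‖)
    (fun _ => norm_nonneg _) (fun n hn => ?_) (fun n hn => ?_)
  · simpa [div_eq_mul_inv, mul_comm] using
      norm_fourierC_le_inv hτ0 hab hlen (a := n) (by exact_mod_cast hn.ne')
  · refine (norm_fourierC_le_inv_sq hτ0 hab hlen (a := n) (by exact_mod_cast hn.ne')).trans_eq ?_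
    rw [hτ]
    push_cast
    field_simp
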